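/- Let 0 < ε ≤ δ and set U_ε^δ := {(x,y) ∈ ℝ × (0,∞) : |x| ≤ δ/2 and max(2|x|, ε) < y ≤ δ}. Then for all real x₁, x₂ with r := |x₁ − x₂|, the hyperbolic measure of the intersection of the two horizontal translates satisfies λ((U_ε^δ + x₁) ∩ (U_ε^δ + x₂)) = R_ε^δ(r), where R_ε^δ(r) := ln(δ/ε) − (1/ε − 1/δ)·r if r ≤ ε; R_ε^δ(r) := ln(δ/r) + r/δ − 1 if ε ≤ r ≤ δ; and R_ε^δ(r) := 0 if r ≥ δ. -/

import Mathlib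

open MeasureTheory

/-- The hyperbolic measure `λ(A) = ∬_A y⁻² dx dy` on the upper half-plane
`ℍ = {(x,y) : y > 0}`. -/
noncomputable def hypMeasure : Measure (ℝ × ℝ) :=
  (volume.restrict {p : ℝ × ℝ | 0 < p.2}).withDensity fun p => ENNReal.ofReal (1 / p.2 ^ 2)

/-- The horizontal translate `A + t = {(x + t, y) : (x, y) ∈ A}`. -/
def htrans (A : Set (ℝ × ℝ)) (t : ℝ) : Set (ℝ × ℝ) := {p : ℝ × ℝ | (p.1 - t, p.2) ∈ A}

/-- The truncated region
`U_ε^δ := {(x,y) ∈ ℝ × (0,∞) : |x| ≤ δ/2 ∧ max(2|x|, ε) < y ≤ δ}`. -/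
def Utrunc (ε δ : ℝ) : Set (ℝ × ℝ) :=
  {p : ℝ × ℝ | |p.1| ≤ δ / 2 ∧ max (2 * |p.1|) ε < p.2 ∧ p.2 ≤ δ}

/-- The piecewise covariance function `R_ε^δ`. -/
noncomputable def Rcov (ε δ r : ℝ) : ℝ :=
  if r ≤ ε then Real.log (δ / ε) - (1 / ε - 1 / δ) * r
  else if r ≤ δ then Real.log (δ / r) + r / δ - 1
  else 0

/-!
At height `y` the slice of `htrans (Utrunc ε δ) t` is the open interval of length `y` centred at
`t` when `ε < y ≤ δ`, and empty otherwise; so the slice of the intersection has length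
`(y - r)⁺`. By Tonelli, `λ = ∫_ε^δ (y - r)⁺ / y² dy`, which is computed with the antiderivative
`log y + r / y` of `(y - r) / y²` on `[max ε r, δ]`.
-/

open Set

theorem MeasurableSet.htrans {A : Set (ℝ × ℝ)} (hA : MeasurableSet A) (t : ℝ) :
    MeasurableSet (htrans A t) :=
  hA.preimage (by fun_prop : Measurable fun p : ℝ × ℝ => (p.1 - t, p.2))

theorem measurableSet_Utrunc (ε δ : ℝ) : MeasurableSet (Utrunc ε δ) := by
  simp only [Utrunc, ofPred_and]
  exact (measurableSet_le (by fun_prop) measurable_const).inter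
    ((measurableSet_lt (by fun_prop) (by fun_prop)).inter
      (measurableSet_le (by fun_prop) measurable_const))

theorem hypMeasure_eq_lintegral_volume_slice {S : Set (ℝ × ℝ)} (hS : MeasurableSet S) :
    hypMeasure S =
      ∫⁻ y in Ioi 0, ENNReal.ofReal (1 / y ^ 2) * volume {x | (x, y) ∈ S} := by
  have hH : {p : ℝ × ℝ | 0 < p.2} = univ ×ˢ Ioi 0 := by ext; simp
  rw [hypMeasure, withDensity_apply _ hS, hH, Measure.volume_eq_prod, ← Measure.prod_restrict,
    Measure.restrict_univ, ← lintegral_indicator hS, lintegral_prod_symm _ (by fun_prop)]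
  refine lintegral_congr fun y => ?_
  have hslice : (fun x => S.indicator (fun p => ENNReal.ofReal (1 / p.2 ^ 2)) (x, y)) =
      {x | (x, y) ∈ S}.indicator fun _ => ENNReal.ofReal (1 / y ^ 2) := by
    ext x
    rfl
  rw [hslice]
  exact lintegral_indicator_const (s := {x | (x, y) ∈ S}) (hS.preimage measurable_prodMk_right) _

theorem slice_htrans_Utrunc_of_mem {ε δ y : ℝ} (hy : y ∈ Ioc ε δ) (t : ℝ) :
    {x | (x, y) ∈ htrans (Utrunc ε δ) t} = Ioo (t - y / 2) (t + y / 2) := by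
  ext x
  simp only [htrans, Utrunc, mem_ofPred_eq, mem_Ioo, max_lt_iff]
  constructor
  · rintro ⟨-, ⟨hx, -⟩, -⟩
    constructor <;> linarith [neg_abs_le (x - t), le_abs_self (x - t)]
  · rintro ⟨h₁, h₂⟩
    have hx : 2 * |x - t| < y := by
      rw [mul_comm, ← lt_div_iff₀ two_pos, abs_sub_lt_iff]; constructor <;> linarith
    exact ⟨by linarith [hy.2], ⟨hx, hy.1⟩, hy.2⟩

theorem slice_htrans_Utrunc_of_notMem {ε δ y : ℝ} (hy : y ∉ Ioc ε δ) (t : ℝ) :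
    {x | (x, y) ∈ htrans (Utrunc ε δ) t} = ∅ :=
  eq_empty_of_forall_notMem fun _ ⟨_, hmax, hyδ⟩ => hy ⟨(le_max_right _ _).trans_lt hmax, hyδ⟩

theorem volume_Ioo_inter_Ioo_sub_half_add_half (a b y : ℝ) :
    volume (Ioo (a - y / 2) (a + y / 2) ∩ Ioo (b - y / 2) (b + y / 2)) =
      ENNReal.ofReal (y - |a - b|) := by
  rw [Ioo_inter_Ioo, Real.volume_Ioo, min_add_add_right, max_sub_sub_right,
    ← max_sub_min_eq_abs']
  congr 1
  ring

theorem volume_slice_inter_htrans_Utrunc (ε δ x₁ x₂ y : ℝ) :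
    volume {x | (x, y) ∈ htrans (Utrunc ε δ) x₁ ∩ htrans (Utrunc ε δ) x₂} =
      (Ioc ε δ).indicator (fun y => ENNReal.ofReal (y - |x₁ - x₂|)) y := by
  by_cases hy : y ∈ Ioc ε δ
  · rw [indicator_of_mem hy, ← volume_Ioo_inter_Ioo_sub_half_add_half,
      ← slice_htrans_Utrunc_of_mem hy, ← slice_htrans_Utrunc_of_mem hy]
    rfl
  · rw [indicator_of_notMem hy]
    refine measure_mono_null (t := {x | (x, y) ∈ htrans (Utrunc ε δ) x₁}) (fun _ hx => hx.1) ?_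
    rw [slice_htrans_Utrunc_of_notMem hy, measure_empty]

theorem hasDerivAt_log_add_div {y : ℝ} (hy : y ≠ 0) (r : ℝ) :
    HasDerivAt (fun y => Real.log y + r / y) ((y - r) / y ^ 2) y := by
  have h := (Real.hasDerivAt_log hy).add ((hasDerivAt_inv hy).const_mul r)
  simp only [← div_eq_mul_inv] at h
  exact h.congr_deriv (by field_simp; ring)

theorem integral_sub_div_sq {a b : ℝ} (ha : 0 < a) (hab : a ≤ b) (r : ℝ) :
    ∫ y in a..b, (y - r) / y ^ 2 = Real.log (b / a) + r / b - r / a := by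
  have hne : ∀ y ∈ uIcc a b, y ≠ 0 := fun y hy => (ha.trans_le (uIcc_of_le hab ▸ hy).1).ne'
  rw [intervalIntegral.integral_eq_sub_of_hasDerivAt
      (fun y hy => hasDerivAt_log_add_div (hne y hy) r)
      (ContinuousOn.intervalIntegrable
        (by fun_prop (disch := exact fun y hy => pow_ne_zero 2 (hne y hy)))),
    Real.log_div (ha.trans_le hab).ne' ha.ne']
  ring

theorem setLIntegral_Ioc_ofReal_sub_div_sq_of_le {a b r : ℝ} (ha : 0 < a) (hab : a ≤ b)
    (hra : r ≤ a) :
    ∫⁻ y in Ioc a b, ENNReal.ofReal ((y - r) / y ^ 2) =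
      ENNReal.ofReal (Real.log (b / a) + r / b - r / a) := by
  have hpos : ∀ y ∈ Icc a b, y ^ 2 ≠ 0 := fun y hy => pow_ne_zero 2 (ha.trans_le hy.1).ne'
  rw [← integral_sub_div_sq ha hab, intervalIntegral.integral_of_le hab,
    ofReal_integral_eq_lintegral_ofReal]
  · exact (ContinuousOn.integrableOn_Icc (by fun_prop (disch := exact hpos))).mono_set
      Ioc_subset_Icc_self
  · exact ae_restrict_of_forall_mem measurableSet_Ioc fun y hy =>
      div_nonneg (by linarith [hy.1]) (sq_nonneg y)

theorem setLIntegral_Ioc_ofReal_sub_div_sq_of_ge {a b r : ℝ} (hbr : b ≤ r) :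
    ∫⁻ y in Ioc a b, ENNReal.ofReal ((y - r) / y ^ 2) = 0 :=
  (setLIntegral_congr_fun measurableSet_Ioc fun y hy => ENNReal.ofReal_eq_zero.2 <|
    div_nonpos_of_nonpos_of_nonneg (by linarith [hy.2]) (sq_nonneg y)).trans lintegral_zero

theorem setLIntegral_Ioc_ofReal_sub_div_sq {a b : ℝ} (ha : 0 < a) (hab : a ≤ b) (r : ℝ) :
    ∫⁻ y in Ioc a b, ENNReal.ofReal ((y - r) / y ^ 2) = ENNReal.ofReal (Rcov a b r) := by
  unfold Rcov
  split_ifs with hra hrb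
  · rw [setLIntegral_Ioc_ofReal_sub_div_sq_of_le ha hab hra]
    congr 1
    ring
  · have har : a < r := lt_of_not_ge hra
    rw [← Ioc_union_Ioc_eq_Ioc har.le hrb, lintegral_union measurableSet_Ioc
        (Ioc_disjoint_Ioc_of_le le_rfl), setLIntegral_Ioc_ofReal_sub_div_sq_of_ge le_rfl,
      zero_add, setLIntegral_Ioc_ofReal_sub_div_sq_of_le (ha.trans har) hrb le_rfl,
      div_self (ha.trans har).ne']
  · rw [setLIntegral_Ioc_ofReal_sub_div_sq_of_ge (le_of_not_ge hrb), ENNReal.ofReal_zero]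

/-- For `0 < ε ≤ δ` and all real `x₁, x₂` with `r := |x₁ − x₂|`, the hyperbolic measure of the
intersection of the two horizontal translates of `U_ε^δ` equals `R_ε^δ(r)`. -/
theorem hypMeasure_inter_htrans_Utrunc (ε δ : ℝ) (hε : 0 < ε) (hεδ : ε ≤ δ) (x₁ x₂ : ℝ) :
    hypMeasure (htrans (Utrunc ε δ) x₁ ∩ htrans (Utrunc ε δ) x₂) =
      ENNReal.ofReal (Rcov ε δ |x₁ - x₂|) := by
  have hU := measurableSet_Utrunc ε δ
  have hpos : Ioc ε δ ⊆ Ioi 0 := fun y hy => hε.trans hy.1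
  -- both sides become integrals over `Ioi 0`, compared pointwise
  rw [hypMeasure_eq_lintegral_volume_slice ((hU.htrans x₁).inter (hU.htrans x₂)),
    ← setLIntegral_Ioc_ofReal_sub_div_sq hε hεδ, ← inter_eq_left.2 hpos,
    ← Measure.restrict_restrict measurableSet_Ioc, ← lintegral_indicator measurableSet_Ioc]
  refine lintegral_congr fun y => ?_
  rw [volume_slice_inter_htrans_Utrunc]
  by_cases hy : y ∈ Ioc ε δ
  · rw [indicator_of_mem hy, indicator_of_mem hy, ← ENNReal.ofReal_mul (by positivity),
      one_div_mul_eq_div]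
  · rw [indicator_of_notMem hy, indicator_of_notMem hy, mul_zero]
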